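/- arXiv:2105.07038 — 2 statements merged into one kernel-verified Lean document; each statement's English description precedes it below -/
import Mathlib

section
/- For every integer k ≥ 2, let K_{2k+1,2(k)} denote the complete (k+1)-partite graph with one part of size 2k+1 and k parts of size 2. Then D_2^2(K_{2k+1,2(k)}) = 3; that is: (i) every 2-coloring of the edges of K_{2k+1,2(k)} admits two monochromatic subgraphs, each of diameter at most 3, whose vertex sets cover all vertices, and (ii) there exists a 2-coloring of the edges of K_{2k+1,2(k)} such that no two monochromatic subgraphs, each of diameter at most 2, have vertex sets covering all vertices. -/
open SimpleGraph

/-- The spanning subgraph of `G` consisting of the edges that receive color `b`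
under the edge-coloring `c`. -/
def SimpleGraph.colorSubgraph {V : Type*} (G : SimpleGraph V) (c : Sym2 V → Bool) (b : Bool) :
    SimpleGraph V where
  Adj u v := G.Adj u v ∧ c s(u, v) = b
  symm := ⟨fun u v h => ⟨h.1.symm, by rw [Sym2.eq_swap]; exact h.2⟩⟩
  loopless := ⟨fun u h => G.loopless.1 u h.1⟩

/-- There are two monochromatic connected subgraphs, each of diameter at most `d`,
whose vertex sets together cover all of `V`. -/
def HasMonoCover {V : Type*} (G : SimpleGraph V) (c : Sym2 V → Bool) (d : ℕ) : Prop :=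
  ∃ (S₁ S₂ : Set V) (b₁ b₂ : Bool),
    (SimpleGraph.induce S₁ (G.colorSubgraph c b₁)).Connected ∧
    (SimpleGraph.induce S₁ (G.colorSubgraph c b₁)).ediam ≤ (d : ℕ∞) ∧
    (SimpleGraph.induce S₂ (G.colorSubgraph c b₂)).Connected ∧
    (SimpleGraph.induce S₂ (G.colorSubgraph c b₂)).ediam ≤ (d : ℕ∞) ∧
    S₁ ∪ S₂ = Set.univ

/-!
Upper bound: the two vertices `u, u'` of a part of size two are adjacent to all other vertices.
If some other vertex `w` sees `u` and `u'` in the same colour `b`, the `b`-double star on `uw`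
(which contains `u'`) and the star of the other colour at `u` cover everything; otherwise every
other vertex sees `u` and `u'` in different colours, and the stars of colour `true` at `u` and
`u'` cover everything.

Lower bound: label the vertices outside the big part `1, …, 2k`, and colour the edge between the
`j`-th vertex `a_j = bigVertex k j _` of the big part and `w` red iff `j ≠ 0` and `w` is not
labelled `j`; all other edges are blue. Among monochromatic sets of diameter at most `2`, a red
one containing `a_0` is `{a_0}`; a blue one contains at most one `a_j` with `j ≠ 0`, since the
only blue neighbour of `a_j` is the vertex labelled `j`; a red one never contains `w` together
with `a_(label w)`, and therefore misses some `a_j` with `j ≠ 0`. These facts rule out every pair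
of colours.
-/

namespace SimpleGraph

variable {V : Type*}

@[simp]
lemma colorSubgraph_adj {G : SimpleGraph V} {c : Sym2 V → Bool} {b : Bool} {u v : V} :
    (G.colorSubgraph c b).Adj u v ↔ G.Adj u v ∧ c s(u, v) = b :=
  Iff.rfl

lemma ediam_le_three_of_forall_edist_le_one {G : SimpleGraph V} {u w : V}
    (huw : G.edist u w ≤ 1) (h : ∀ x, G.edist x u ≤ 1 ∨ G.edist x w ≤ 1) : G.ediam ≤ 3 := by
  have near : ∀ x, ∃ a, (a = u ∨ a = w) ∧ G.edist x a ≤ 1 := fun x =>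
    (h x).elim (fun h => ⟨u, .inl rfl, h⟩) (fun h => ⟨w, .inr rfl, h⟩)
  have centres : ∀ a b, (a = u ∨ a = w) → (b = u ∨ b = w) → G.edist a b ≤ 1 := by
    rintro a b (rfl | rfl) (rfl | rfl) <;> first | simp | exact huw | rwa [edist_comm]
  refine ediam_le_of_edist_le fun x y => ?_
  obtain ⟨a, ha, hxa⟩ := near x
  obtain ⟨b, hb, hyb⟩ := near y
  calc G.edist x y ≤ G.edist x a + G.edist a b + G.edist b y :=
        SimpleGraph.edist_triangle.trans (add_le_add_left SimpleGraph.edist_triangle _)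
    _ ≤ 1 + 1 + 1 := by
        gcongr
        · exact centres a b ha hb
        · rwa [edist_comm]
    _ = 3 := by norm_num

/-- The closed neighbourhood of `{u, w}`: a star if `u = w`, a double star if `uw` is an edge. -/
def pairClosedNbhd (H : SimpleGraph V) (u w : V) : Set V :=
  {x | x = u ∨ x = w ∨ H.Adj u x ∨ H.Adj w x}

lemma induce_pairClosedNbhd_connected_and_ediam_le_three (H : SimpleGraph V) {u w : V}
    (huw : u = w ∨ H.Adj u w) :
    (H.induce (H.pairClosedNbhd u w)).Connected ∧ (H.induce (H.pairClosedNbhd u w)).ediam ≤ 3 := by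
  set S := H.pairClosedNbhd u w
  have hdiam : (H.induce S).ediam ≤ 3 := by
    refine ediam_le_three_of_forall_edist_le_one (u := ⟨u, .inl rfl⟩) (w := ⟨w, .inr (.inl rfl)⟩)
      ?_ fun ⟨x, hx⟩ => ?_
    · rw [edist_le_one_iff_adj_or_eq]
      rcases huw with rfl | huw
      · exact .inr rfl
      · exact .inl huw
    · simp only [edist_le_one_iff_adj_or_eq, comap_adj,
        Function.Embedding.subtype_apply]
      rcases hx with rfl | rfl | hx | hx
      · exact .inl (.inr rfl)
      · exact .inr (.inr rfl)
      · exact .inl (.inl hx.symm)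
      · exact .inr (.inl hx.symm)
  have : Nonempty S := ⟨⟨u, .inl rfl⟩⟩
  exact ⟨connected_of_ediam_ne_top (ne_top_of_le_ne_top (by simp) hdiam), hdiam⟩

lemma eq_or_adj_or_exists_adj_adj_of_induce_ediam_le_two {H : SimpleGraph V} {S : Set V}
    (hd : (H.induce S).ediam ≤ 2) {x y : V} (hx : x ∈ S) (hy : y ∈ S) :
    x = y ∨ H.Adj x y ∨ ∃ z ∈ S, H.Adj x z ∧ H.Adj z y := by
  by_contra! hxy
  have hle : (H.induce S).edist ⟨x, hx⟩ ⟨y, hy⟩ ≤ 2 := edist_le_ediam.trans hd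
  refine hle.not_gt (two_lt_edist_iff.2 ⟨?_, hxy.2.1, ?_⟩)
  · exact fun h => hxy.1 (congrArg Subtype.val h)
  · refine Set.eq_empty_iff_forall_notMem.2 fun ⟨z, hz⟩ hmem => ?_
    rw [mem_commonNeighbors] at hmem
    exact hxy.2.2 z hz hmem.1 hmem.2.symm

lemma eq_of_induce_ediam_le_two_of_forall_not_adj {H : SimpleGraph V} {S : Set V}
    (hd : (H.induce S).ediam ≤ 2) {a v : V} (ha : a ∈ S) (hv : v ∈ S) (hiso : ∀ x, ¬ H.Adj a x) :
    a = v := by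
  rcases eq_or_adj_or_exists_adj_adj_of_induce_ediam_le_two hd ha hv with h | h | ⟨z, -, h, -⟩
  · exact h
  all_goals exact absurd h (hiso _)

end SimpleGraph

theorem hasMonoCover_three_of_forall_adj {V : Type*} (G : SimpleGraph V) (c : Sym2 V → Bool)
    {u u' : V} (hadj : ∀ v, v ≠ u → v ≠ u' → G.Adj u v ∧ G.Adj u' v) : HasMonoCover G c 3 := by
  by_cases hex : ∃ w, w ≠ u ∧ w ≠ u' ∧ c s(u, w) = c s(u', w)
  · obtain ⟨w, hwu, hwu', hc⟩ := hex
    set b := c s(u, w)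
    obtain ⟨hS, hdS⟩ := (G.colorSubgraph c b).induce_pairClosedNbhd_connected_and_ediam_le_three
      (w := w) (.inr ⟨(hadj w hwu hwu').1, rfl⟩)
    obtain ⟨hT, hdT⟩ := (G.colorSubgraph c !b).induce_pairClosedNbhd_connected_and_ediam_le_three
      (u := u) (w := u) (.inl rfl)
    refine ⟨_, _, b, !b, hS, hdS, hT, hdT, Set.eq_univ_of_forall fun v => ?_⟩
    by_cases hvu : v = u
    · exact .inl (.inl hvu)
    by_cases hvu' : v = u'
    · subst hvu'
      exact .inl (.inr (.inr (.inr ⟨(hadj w hwu hwu').2.symm, by rw [Sym2.eq_swap, hc]⟩)))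
    · by_cases hcv : c s(u, v) = b
      · exact .inl (.inr (.inr (.inl ⟨(hadj v hvu hvu').1, hcv⟩)))
      · exact .inr (.inr (.inr (.inl ⟨(hadj v hvu hvu').1, Bool.eq_not_iff.2 hcv⟩)))
  · push Not at hex
    obtain ⟨hS, hdS⟩ := (G.colorSubgraph c true).induce_pairClosedNbhd_connected_and_ediam_le_three
      (u := u) (w := u) (.inl rfl)
    obtain ⟨hT, hdT⟩ := (G.colorSubgraph c true).induce_pairClosedNbhd_connected_and_ediam_le_three
      (u := u') (w := u') (.inl rfl)
    refine ⟨_, _, true, true, hS, hdS, hT, hdT, Set.eq_univ_of_forall fun v => ?_⟩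
    by_cases hvu : v = u
    · exact .inl (.inl hvu)
    by_cases hvu' : v = u'
    · exact .inr (.inl hvu')
    · cases hcv : c s(u, v)
      · have hcv' : c s(u', v) = true := by simpa [hcv] using (hex v hvu hvu').symm
        exact .inr (.inr (.inr (.inl ⟨(hadj v hvu hvu').2, hcv'⟩)))
      · exact .inl (.inr (.inr (.inl ⟨(hadj v hvu hvu').1, hcv⟩)))

namespace OddPairsGraph

abbrev Vtx (k : ℕ) : Type := Σ i : Fin (k + 1), Fin (if i = 0 then 2 * k + 1 else 2)

abbrev graph (k : ℕ) : SimpleGraph (Vtx k) :=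
  completeMultipartiteGraph (fun i : Fin (k + 1) => Fin (if i = 0 then 2 * k + 1 else 2))

variable {k : ℕ}

lemma graph_adj {u v : Vtx k} : (graph k).Adj u v ↔ u.1 ≠ v.1 := by
  simp

lemma snd_lt_of_fst_ne_zero {v : Vtx k} (hv : v.1 ≠ 0) : (v.2 : ℕ) < 2 := by
  simpa [hv] using v.2.isLt

lemma exists_forall_adj_of_ne (hk : 1 ≤ k) :
    ∃ u u' : Vtx k, ∀ v, v ≠ u → v ≠ u' → (graph k).Adj u v ∧ (graph k).Adj u' v := by
  have hi : Fin.last k ≠ 0 := by simp [Fin.ext_iff]; omega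
  refine ⟨⟨Fin.last k, ⟨0, by simp [hi]⟩⟩, ⟨Fin.last k, ⟨1, by simp [hi]⟩⟩,
    fun ⟨i, t⟩ hu hu' => ?_⟩
  simp only [graph_adj, ne_eq, and_self]
  rintro rfl
  have : (t : ℕ) < 2 := snd_lt_of_fst_ne_zero (v := ⟨_, t⟩) hi
  interval_cases h : (t : ℕ)
  · exact hu (Sigma.ext rfl (heq_of_eq (Fin.ext h)))
  · exact hu' (Sigma.ext rfl (heq_of_eq (Fin.ext h)))

def bigVertex (k j : ℕ) (hj : j < 2 * k + 1) : Vtx k := ⟨0, ⟨j, by simpa using hj⟩⟩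

lemma bigVertex_inj {i j : ℕ} {hi : i < 2 * k + 1} {hj : j < 2 * k + 1} :
    bigVertex k i hi = bigVertex k j hj ↔ i = j :=
  ⟨fun h => congrArg (fun v : Vtx k => (v.2 : ℕ)) h, fun h => by subst h; rfl⟩

def label (v : Vtx k) : ℕ := 2 * v.1 - 1 + v.2

lemma label_ne_zero {v : Vtx k} (hv : v.1 ≠ 0) : label v ≠ 0 := by
  have : (v.1 : ℕ) ≠ 0 := fun h => hv (Fin.ext h)
  unfold label; omega

lemma label_lt {v : Vtx k} (hv : v.1 ≠ 0) : label v < 2 * k + 1 := by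
  have := v.1.isLt
  have := snd_lt_of_fst_ne_zero hv
  have : (v.1 : ℕ) ≠ 0 := fun h => hv (Fin.ext h)
  unfold label; omega

lemma fst_eq_of_label_eq {v w : Vtx k} (hv : v.1 ≠ 0) (hw : w.1 ≠ 0) (h : label v = label w) :
    v.1 = w.1 := by
  have := snd_lt_of_fst_ne_zero hv
  have := snd_lt_of_fst_ne_zero hw
  have : (v.1 : ℕ) ≠ 0 := fun h => hv (Fin.ext h)
  have : (w.1 : ℕ) ≠ 0 := fun h => hw (Fin.ext h)
  unfold label at h
  exact Fin.ext (by omega)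

lemma exists_label_eq {m : ℕ} (hm : m ≠ 0) (hmk : m < 2 * k + 1) :
    ∃ v : Vtx k, v.1 ≠ 0 ∧ label v = m := by
  have hi : ((m + 1) / 2 : ℕ) ≠ 0 := by omega
  refine ⟨⟨⟨(m + 1) / 2, by omega⟩, ⟨(m + 1) % 2, ?_⟩⟩, fun h => hi (congrArg Fin.val h), ?_⟩
  · rw [if_neg fun h => hi (congrArg Fin.val h)]; omega
  · simp only [label]; omega

lemma exists_fst_eq_label_ne {v : Vtx k} (hv : v.1 ≠ 0) :
    ∃ w : Vtx k, w.1 = v.1 ∧ label w ≠ label v := by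
  have := snd_lt_of_fst_ne_zero hv
  refine ⟨⟨v.1, ⟨1 - v.2, by simp only [hv, if_false]; omega⟩⟩, rfl, ?_⟩
  simp only [label]; omega

/-- The vertex `a` of the big part sends a red edge to `w`. -/
def RedPair (a w : Vtx k) : Prop := a.1 = 0 ∧ w.1 ≠ 0 ∧ (a.2 : ℕ) ≠ 0 ∧ (a.2 : ℕ) ≠ label w

instance : DecidableRel (RedPair (k := k)) := fun _ _ => by unfold RedPair; infer_instance

def coloring (k : ℕ) : Sym2 (Vtx k) → Bool :=
  Sym2.lift ⟨fun u v => decide (RedPair u v ∨ RedPair v u), fun _ _ => decide_eq_decide.2 or_comm⟩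

abbrev red (k : ℕ) : SimpleGraph (Vtx k) := (graph k).colorSubgraph (coloring k) true

abbrev blue (k : ℕ) : SimpleGraph (Vtx k) := (graph k).colorSubgraph (coloring k) false

lemma red_adj_iff {u v : Vtx k} : (red k).Adj u v ↔ RedPair u v ∨ RedPair v u := by
  simp only [colorSubgraph_adj, graph_adj, coloring, Sym2.lift_mk, decide_eq_true_eq,
    and_iff_right_iff_imp]
  rintro (⟨hu, hv, -⟩ | ⟨hv, hu, -⟩)
  · rwa [hu, ne_comm]
  · rwa [hv]

lemma blue_adj_iff {u v : Vtx k} :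
    (blue k).Adj u v ↔ u.1 ≠ v.1 ∧ ¬ (RedPair u v ∨ RedPair v u) := by
  simp [coloring]

lemma fst_eq_zero_iff_of_red_adj {u v : Vtx k} (h : (red k).Adj u v) : u.1 = 0 ↔ v.1 ≠ 0 := by
  rcases red_adj_iff.1 h with ⟨hu, hv, -⟩ | ⟨hv, hu, -⟩
  · simp [hu, hv]
  · simp [hu, hv]

lemma fst_ne_zero_and_label_eq_of_blue_adj {j : ℕ} {hj : j < 2 * k + 1} {v : Vtx k} (hj₀ : j ≠ 0)
    (h : (blue k).Adj (bigVertex k j hj) v) : v.1 ≠ 0 ∧ label v = j := by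
  obtain ⟨hne, hred⟩ := blue_adj_iff.1 h
  have hv : v.1 ≠ 0 := fun hv => hne hv.symm
  refine ⟨hv, ?_⟩
  by_contra hlabel
  exact hred (.inl ⟨rfl, hv, hj₀, Ne.symm hlabel⟩)

variable {S T : Set (Vtx k)}

lemma eq_of_mem_of_blue {i j : ℕ} {hi : i < 2 * k + 1} {hj : j < 2 * k + 1}
    (hS : ((blue k).induce S).ediam ≤ 2) (hiS : bigVertex k i hi ∈ S) (hjS : bigVertex k j hj ∈ S)
    (hi₀ : i ≠ 0) (hj₀ : j ≠ 0) : i = j := by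
  rcases eq_or_adj_or_exists_adj_adj_of_induce_ediam_le_two hS hiS hjS with h | h | ⟨z, -, hz, hz'⟩
  · exact bigVertex_inj.1 h
  · exact absurd rfl (blue_adj_iff.1 h).1
  · exact (fst_ne_zero_and_label_eq_of_blue_adj hi₀ hz).2.symm.trans
      (fst_ne_zero_and_label_eq_of_blue_adj hj₀ hz'.symm).2

lemma bigVertex_label_not_mem_of_red (hS : ((red k).induce S).ediam ≤ 2) {w : Vtx k}
    (hw₀ : w.1 ≠ 0) (hw : w ∈ S) : bigVertex k (label w) (label_lt hw₀) ∉ S := by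
  intro ha
  rcases eq_or_adj_or_exists_adj_adj_of_induce_ediam_le_two hS ha hw with h | h | ⟨z, -, haz, hzw⟩
  · exact hw₀ (h ▸ rfl)
  · rcases red_adj_iff.1 h with ⟨-, -, -, h'⟩ | ⟨h', -⟩
    · exact h' rfl
    · exact hw₀ h'
  · exact (fst_eq_zero_iff_of_red_adj haz).1 rfl ((fst_eq_zero_iff_of_red_adj hzw).2 hw₀)

lemma exists_bigVertex_not_mem_of_red (hk : 1 ≤ k) (hS : ((red k).induce S).ediam ≤ 2) :
    ∃ j, ∃ hj : j < 2 * k + 1, j ≠ 0 ∧ bigVertex k j hj ∉ S := by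
  by_contra! hall
  have h₁ := hall 1 (by omega) one_ne_zero
  have h₂ := hall 2 (by omega) two_ne_zero
  rcases eq_or_adj_or_exists_adj_adj_of_induce_ediam_le_two hS h₁ h₂ with h | h | ⟨z, hz, h, -⟩
  · exact absurd (bigVertex_inj.1 h) (by omega)
  · exact (fst_eq_zero_iff_of_red_adj h).1 rfl rfl
  · have hz₀ : z.1 ≠ 0 := (fst_eq_zero_iff_of_red_adj h).1 rfl
    exact bigVertex_label_not_mem_of_red hS hz₀ hz (hall _ _ (label_ne_zero hz₀))

lemma not_red_adj_bigVertex_zero {h : 0 < 2 * k + 1} {v : Vtx k} :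
    ¬ (red k).Adj (bigVertex k 0 h) v := by
  rw [red_adj_iff]
  rintro (⟨-, -, h, -⟩ | ⟨-, h, -⟩)
  · exact h rfl
  · exact h rfl

lemma false_of_blue_blue_cover (hk : 2 ≤ k) (hS : ((blue k).induce S).ediam ≤ 2)
    (hT : ((blue k).induce T).ediam ≤ 2) (hcov : ∀ v, v ∈ S ∨ v ∈ T) : False := by
  wlog h₁ : bigVertex k 1 (by omega) ∈ S generalizing S T
  · exact this hT hS (fun v => (hcov v).symm) ((hcov _).resolve_left h₁)
  have mem_T : ∀ j (hj : j < 2 * k + 1), j ≠ 0 → j ≠ 1 → bigVertex k j hj ∈ T :=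
    fun j _ hj₀ hj₁ =>
      (hcov _).resolve_left fun h => hj₁ (eq_of_mem_of_blue hS h h₁ hj₀ one_ne_zero)
  exact absurd (eq_of_mem_of_blue hT (mem_T 2 (by omega) two_ne_zero (by omega))
    (mem_T 3 (by omega) three_ne_zero (by omega)) two_ne_zero three_ne_zero) (by omega)

lemma false_of_red_red_cover (hk : 1 ≤ k) (hS : ((red k).induce S).ediam ≤ 2)
    (hT : ((red k).induce T).ediam ≤ 2) (hcov : ∀ v, v ∈ S ∨ v ∈ T) : False := by
  wlog h₀ : bigVertex k 0 (by omega) ∈ S generalizing S T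
  · exact this hT hS (fun v => (hcov v).symm) ((hcov _).resolve_left h₀)
  obtain ⟨j, hj, hj₀, hjT⟩ := exists_bigVertex_not_mem_of_red hk hT
  have := eq_of_induce_ediam_le_two_of_forall_not_adj hS h₀ ((hcov _).resolve_right hjT)
    fun _ => not_red_adj_bigVertex_zero
  exact hj₀ (bigVertex_inj.1 this).symm

/-- Unless `S = {a_0}`, the red set misses some `a_j` with `j ≠ 0`, which then lies in the blue
set; the vertex `b` sharing its part with the vertex labelled `j` then lies in neither set. -/
lemma false_of_red_blue_cover (hk : 1 ≤ k) (hS : ((red k).induce S).ediam ≤ 2)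
    (hT : ((blue k).induce T).ediam ≤ 2) (hcov : ∀ v, v ∈ S ∨ v ∈ T) : False := by
  by_cases h₀ : bigVertex k 0 (by omega) ∈ S
  · have mem_T : ∀ j (hj : j < 2 * k + 1), j ≠ 0 → bigVertex k j hj ∈ T := fun j _ hj₀ =>
      (hcov _).resolve_left fun h => hj₀ (bigVertex_inj.1 <|
        eq_of_induce_ediam_le_two_of_forall_not_adj hS h₀ h
          fun _ => not_red_adj_bigVertex_zero).symm
    exact absurd (eq_of_mem_of_blue hT (mem_T 1 (by omega) one_ne_zero)
      (mem_T 2 (by omega) two_ne_zero) one_ne_zero two_ne_zero) (by omega)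
  obtain ⟨j, hj, hj₀, hjS⟩ := exists_bigVertex_not_mem_of_red hk hS
  have hjT := (hcov _).resolve_left hjS
  obtain ⟨w, hw₀, hwj⟩ := exists_label_eq hj₀ hj
  obtain ⟨b, hbw, hbl⟩ := exists_fst_eq_label_ne hw₀
  have hb₀ : b.1 ≠ 0 := hbw ▸ hw₀
  rcases hcov b with hbS | hbT
  · refine bigVertex_label_not_mem_of_red hS hb₀ hbS ((hcov _).resolve_right fun h => hbl ?_)
    rw [hwj]
    exact eq_of_mem_of_blue hT h hjT (label_ne_zero hb₀) hj₀
  · rcases eq_or_adj_or_exists_adj_adj_of_induce_ediam_le_two hT hjT hbT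
      with h | h | ⟨z, -, hz, hzb⟩
    · exact hb₀ (h ▸ rfl)
    · exact hbl ((fst_ne_zero_and_label_eq_of_blue_adj hj₀ h).2.trans hwj.symm)
    · obtain ⟨hz₀, hzl⟩ := fst_ne_zero_and_label_eq_of_blue_adj hj₀ hz
      have hzw : z.1 = w.1 := fst_eq_of_label_eq hz₀ hw₀ (hzl.trans hwj.symm)
      exact (blue_adj_iff.1 hzb).1 (hzw.trans hbw.symm)

theorem not_hasMonoCover_two (hk : 2 ≤ k) : ¬ HasMonoCover (graph k) (coloring k) 2 := by
  rintro ⟨S, T, b, b', -, hS, -, hT, hcov⟩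
  replace hcov : ∀ v, v ∈ S ∨ v ∈ T := fun v => (Set.eq_univ_iff_forall.1 hcov v : v ∈ S ∪ T)
  cases b <;> cases b'
  · exact false_of_blue_blue_cover hk hS hT hcov
  · exact false_of_red_blue_cover (by omega) hT hS fun v => (hcov v).symm
  · exact false_of_red_blue_cover (by omega) hS hT hcov
  · exact false_of_red_red_cover (by omega) hS hT hcov

end OddPairsGraph

theorem stmt2 (k : ℕ) (hk : 2 ≤ k) :
    (∀ col : Sym2 (Σ i : Fin (k + 1), Fin (if i = 0 then 2 * k + 1 else 2)) → Bool,
      HasMonoCover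
        (completeMultipartiteGraph (fun i : Fin (k + 1) => Fin (if i = 0 then 2 * k + 1 else 2)))
        col 3) ∧
    (∃ col : Sym2 (Σ i : Fin (k + 1), Fin (if i = 0 then 2 * k + 1 else 2)) → Bool,
      ¬ HasMonoCover
        (completeMultipartiteGraph (fun i : Fin (k + 1) => Fin (if i = 0 then 2 * k + 1 else 2)))
        col 2) := by
  obtain ⟨u, u', hadj⟩ := OddPairsGraph.exists_forall_adj_of_ne (by omega : 1 ≤ k)
  exact ⟨fun col => hasMonoCover_three_of_forall_adj _ col hadj,
    OddPairsGraph.coloring k, OddPairsGraph.not_hasMonoCover_two hk⟩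
end

section
/- Fix an integer r ≥ 2. Suppose that for every finite simple graph G and every r-coloring of the edges of G, the vertex set of G can be covered by the vertex sets of at most (r−1)·α(G) monochromatic connected subgraphs (i.e., tc_r(G) ≤ (r−1)·α(G) for every graph G). Then every finite r-partite hypergraph H satisfies τ(H) ≤ (r−1)·ν(H). -/
open SimpleGraph

/-- `S` is a vertex cover of the hypergraph with edge set `E`: it meets every edge. -/
def IsHypVertexCover {W : Type*} (E : Finset (Finset W)) (S : Finset W) : Prop :=
  ∀ e ∈ E, ∃ v ∈ S, v ∈ e

/-- The vertex cover number `τ` of the hypergraph with edge set `E`: the least size of a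
vertex cover. -/
noncomputable def hypTau {W : Type*} (E : Finset (Finset W)) : ℕ :=
  sInf {n | ∃ S : Finset W, IsHypVertexCover E S ∧ S.card = n}

/-- The matching number `ν` of the hypergraph with edge set `E`: the greatest size of a
set of pairwise disjoint edges. -/
noncomputable def hypNu {W : Type*} (E : Finset (Finset W)) : ℕ :=
  sSup {n | ∃ M : Finset (Finset W), M ⊆ E ∧
    (∀ e ∈ M, ∀ f ∈ M, e ≠ f → Disjoint e f) ∧ M.card = n}

/-- The hypergraph with edge set `E` is `r`-partite: the vertices can be partitioned into
`r` classes such that no edge contains two distinct vertices of the same class. -/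
def IsHypRPartite {W : Type*} (r : ℕ) (E : Finset (Finset W)) : Prop :=
  ∃ p : W → Fin r, ∀ e ∈ E, ∀ u ∈ e, ∀ v ∈ e, u ≠ v → p u ≠ p v

/-- The spanning subgraph of `G` consisting of the edges that receive color `b`
under the edge-coloring `c` with `r` colors. -/
def SimpleGraph.monoSubgraph {V : Type*} {r : ℕ} (G : SimpleGraph V) (c : Sym2 V → Fin r)
    (b : Fin r) : SimpleGraph V where
  Adj u v := G.Adj u v ∧ c s(u, v) = b
  symm := ⟨fun u v h => ⟨h.1.symm, by rw [Sym2.eq_swap]; exact h.2⟩⟩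
  loopless := ⟨fun u h => G.loopless.irrefl u h.1⟩

/-- The independence number `α` of a graph: the greatest size of a set of pairwise
non-adjacent vertices. -/
noncomputable def indepNum {V : Type*} (G : SimpleGraph V) : ℕ :=
  sSup {n | ∃ S : Finset V, (∀ u ∈ S, ∀ v ∈ S, ¬ G.Adj u v) ∧ S.card = n}

/-- The vertex set of `G` can be covered by at most `t` monochromatic connected subgraphs
with respect to the `r`-coloring `c`. -/
def HasTreeCover {V : Type*} {r : ℕ} (G : SimpleGraph V) (c : Sym2 V → Fin r) (t : ℕ) : Prop :=
  ∃ (m : ℕ) (S : Fin m → Set V) (b : Fin m → Fin r), m ≤ t ∧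
    (∀ i, (SimpleGraph.induce (S i) (G.monoSubgraph c (b i))).Connected) ∧
    (⋃ i, S i) = Set.univ

/-!
Let `p` be an `r`-partition of `H`. On the intersection graph `G` of the edges of `H`, color
an adjacent pair `e, f` by the class of a vertex of `e ∩ f`. Independent sets of `G` are
matchings of `H`, so `α(G) ≤ ν(H)`. Since an edge of `H` has at most one vertex in each class,
all edges in a connected subgraph of color `b` share the same vertex of class `b`; hence a cover
of `G` by `t` monochromatic connected subgraphs yields a vertex cover of `H` of size at most `t`.
-/

open Finset

variable {W : Type*} {E : Finset (Finset W)}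

lemma hypTau_le_card {S : Finset W} (hS : IsHypVertexCover E S) : hypTau E ≤ S.card :=
  Nat.sInf_le ⟨S, hS, rfl⟩

lemma card_le_hypNu {M : Finset (Finset W)} (hME : M ⊆ E)
    (hM : ∀ e ∈ M, ∀ f ∈ M, e ≠ f → Disjoint e f) : M.card ≤ hypNu E :=
  le_csSup ⟨E.card, by rintro n ⟨M', hM'E, -, rfl⟩; exact card_le_card hM'E⟩ ⟨M, hME, hM, rfl⟩

def intersectionGraph (E : Finset (Finset W)) : SimpleGraph E :=
  SimpleGraph.fromRel fun e f => ¬ Disjoint (e : Finset W) f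

lemma intersectionGraph_adj {e f : E} :
    (intersectionGraph E).Adj e f ↔ e ≠ f ∧ ¬ Disjoint (e : Finset W) f := by
  simp [intersectionGraph, disjoint_comm]

lemma indepNum_intersectionGraph_le_hypNu : _root_.indepNum (intersectionGraph E) ≤ hypNu E := by
  refine csSup_le' ?_
  rintro n ⟨A, hA, rfl⟩
  rw [← card_map (Function.Embedding.subtype _)]
  refine card_le_hypNu (fun e he => ?_) fun e he f hf hef => ?_
  · obtain ⟨x, -, rfl⟩ := mem_map.mp he
    exact x.2
  · obtain ⟨x, hx, rfl⟩ := mem_map.mp he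
    obtain ⟨y, hy, rfl⟩ := mem_map.mp hf
    by_contra hxy
    exact hA x hx y hy (intersectionGraph_adj.mpr ⟨fun h => hef (congrArg _ h), hxy⟩)

open Classical in
noncomputable def intersectionColoring {κ : Type*} [Nonempty κ] (p : W → κ) : Sym2 E → κ :=
  Sym2.lift ⟨fun e f =>
    if h : ((e : Set W) ∩ (f : Finset W)).Nonempty then p h.choose else Classical.arbitrary κ,
    fun e f => by dsimp only; rw [Set.inter_comm]⟩

lemma exists_mem_inter_intersectionColoring {κ : Type*} [Nonempty κ] (p : W → κ) {e f : E}
    (hef : (intersectionGraph E).Adj e f) :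
    ∃ w ∈ (e : Finset W), w ∈ (f : Finset W) ∧ p w = intersectionColoring p s(e, f) := by
  obtain ⟨w, hwe, hwf⟩ := not_disjoint_iff.mp (intersectionGraph_adj.mp hef).2
  have h : ((e : Set W) ∩ (f : Finset W)).Nonempty := ⟨w, hwe, hwf⟩
  exact ⟨h.choose, h.choose_spec.1, h.choose_spec.2, by simp [intersectionColoring, h]⟩

section Monochromatic

variable {r : ℕ} [NeZero r] {p : W → Fin r} {b : Fin r} {S : Set E}

lemma reachable_monoSubgraph_intersectionGraph (hp : ∀ e ∈ E, Set.InjOn p e) {x y : S}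
    (hxy : (((intersectionGraph E).monoSubgraph (intersectionColoring p) b).induce S).Reachable
      x y) :
    x = y ∨ ∃ w, p w = b ∧ w ∈ (x : Finset W) ∧ w ∈ (y : Finset W) := by
  rw [SimpleGraph.reachable_iff_reflTransGen] at hxy
  induction hxy with
  | refl => exact Or.inl rfl
  | @tail y z _ hyz ih =>
    obtain ⟨hadj, hcolor⟩ :
      (intersectionGraph E).Adj y z ∧ intersectionColoring p s((y : E), z) = b := hyz
    obtain ⟨w', hw'y, hw'z, hw'b⟩ := exists_mem_inter_intersectionColoring p hadj
    rw [hcolor] at hw'b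
    rcases ih with rfl | ⟨w, hwb, hwx, hwy⟩
    · exact Or.inr ⟨w', hw'b, hw'y, hw'z⟩
    · have : w = w' := hp _ (y : E).2 hwy hw'y (hwb.trans hw'b.symm)
      exact Or.inr ⟨w, hwb, hwx, this ▸ hw'z⟩

lemma exists_mem_forall_of_connected_monoSubgraph (hE : ∀ e ∈ E, e.Nonempty)
    (hp : ∀ e ∈ E, Set.InjOn p e)
    (hS : (((intersectionGraph E).monoSubgraph (intersectionColoring p) b).induce S).Connected) :
    ∃ v, ∀ e ∈ S, v ∈ (e : Finset W) := by
  obtain ⟨e₀⟩ := hS.nonempty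
  have key (g : E) (hg : g ∈ S) := reachable_monoSubgraph_intersectionGraph hp
    (hS.preconnected e₀ ⟨g, hg⟩)
  by_cases h : ∃ w ∈ ((e₀ : E) : Finset W), p w = b
  · obtain ⟨w, hwe₀, hwb⟩ := h
    refine ⟨w, fun g hg => ?_⟩
    rcases key g hg with heq | ⟨w', hw'b, hw'e₀, hw'g⟩
    · rwa [← show (e₀ : E) = g from congrArg Subtype.val heq]
    · rwa [hp _ (e₀ : E).2 hwe₀ hw'e₀ (hwb.trans hw'b.symm)]
  · obtain ⟨v, hv⟩ := hE _ (e₀ : E).2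
    refine ⟨v, fun g hg => ?_⟩
    rcases key g hg with heq | ⟨w', hw'b, hw'e₀, -⟩
    · rwa [← show (e₀ : E) = g from congrArg Subtype.val heq]
    · exact absurd ⟨w', hw'e₀, hw'b⟩ h

end Monochromatic

theorem stmt14 (r : ℕ) (hr : 2 ≤ r)
    (tc : ∀ (V : Type) [Fintype V] (G : SimpleGraph V) (c : Sym2 V → Fin r),
      HasTreeCover G c ((r - 1) * _root_.indepNum G)) :
    ∀ (W : Type) [Fintype W] [DecidableEq W] (E : Finset (Finset W)),
      (∀ e ∈ E, e.Nonempty) → IsHypRPartite r E → hypTau E ≤ (r - 1) * hypNu E := by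
  intro W _ _ E hE ⟨p, hp⟩
  have : NeZero r := ⟨by omega⟩
  have hinj (e) (he : e ∈ E) : Set.InjOn p e := fun u hu v hv huv =>
    not_not.mp fun hne => hp e he u hu v hv hne huv
  obtain ⟨m, S, b, hm, hS, hcover⟩ := tc E (intersectionGraph E) (intersectionColoring p)
  choose v hv using fun i => exists_mem_forall_of_connected_monoSubgraph hE hinj (hS i)
  have hT : IsHypVertexCover E (univ.image v) := fun e he => by
    obtain ⟨i, hi⟩ := Set.mem_iUnion.mp (hcover ▸ Set.mem_univ (⟨e, he⟩ : E))
    exact ⟨v i, mem_image_of_mem v (mem_univ i), hv i _ hi⟩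
  calc hypTau E ≤ (univ.image v).card := hypTau_le_card hT
    _ ≤ m := card_image_le.trans (card_fin m).le
    _ ≤ (r - 1) * _root_.indepNum (intersectionGraph E) := hm
    _ ≤ (r - 1) * hypNu E := Nat.mul_le_mul_left _ indepNum_intersectionGraph_le_hypNu
end
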